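/- Let F ∈ F^{M×K} and G ∈ F^{N×K} over a field, with I ⊆ [K] satisfying rank([F_I; G_I]) = rank(F_I) + N. Then there exists P ∈ F^{K×N} such that F·P = 0, rank(G·P) = N, and every row of P indexed outside I is zero. -/

import Mathlib

/-!
On the columns in `I`, the rank condition says that `G_I` maps the kernel of `F_I` onto the
whole of `𝔽^N` (rank–nullity, since the kernel of the stack `[F_I; G_I]` is
`ker F_I ⊓ ker G_I`). Preimages of the standard basis vectors are the columns of a matrix `Q`
with `F_I Q = 0` and `G_I Q = 1`; padding `Q` with zero rows outside `I` gives `P`.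
-/

/-- The submatrix of `A` formed by the columns indexed by the subset `I`. -/
def colSub {𝔽 : Type*} {M K : ℕ} (A : Matrix (Fin M) (Fin K) 𝔽) (I : Finset (Fin K)) :
    Matrix (Fin M) {x // x ∈ I} 𝔽 :=
  A.submatrix id Subtype.val

open LinearMap Module

section RankNullity

variable {𝕜 V W₁ W₂ : Type*} [Field 𝕜] [AddCommGroup V] [Module 𝕜 V] [FiniteDimensional 𝕜 V]
  [AddCommGroup W₁] [Module 𝕜 W₁] [AddCommGroup W₂] [Module 𝕜 W₂]

theorem LinearMap.finrank_map_ker_add_finrank_ker_inf (f : V →ₗ[𝕜] W₁) (g : V →ₗ[𝕜] W₂) :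
    finrank 𝕜 ((ker f).map g) + finrank 𝕜 ↥(ker f ⊓ ker g) = finrank 𝕜 (ker f) := by
  have h := finrank_range_add_finrank_ker (g.domRestrict (ker f))
  rwa [range_domRestrict, ker_domRestrict, ← Submodule.finrank_map_subtype_eq,
    Submodule.map_comap_subtype] at h

end RankNullity

namespace Matrix

variable {𝕜 m n p : Type*} [Field 𝕜] [Fintype n]

theorem ker_mulVecLin_fromRows (A : Matrix m n 𝕜) (B : Matrix p n 𝕜) :
    ker (fromRows A B).mulVecLin = ker A.mulVecLin ⊓ ker B.mulVecLin := by
  ext v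
  simp [fromRows_mulVec, ← Sum.elim_zero_zero, Sum.elim_eq_iff]

theorem rank_fromRows (A : Matrix m n 𝕜) (B : Matrix p n 𝕜) :
    (fromRows A B).rank = A.rank + finrank 𝕜 ((ker A.mulVecLin).map B.mulVecLin) := by
  have hAB := finrank_range_add_finrank_ker (fromRows A B).mulVecLin
  have hA := finrank_range_add_finrank_ker A.mulVecLin
  have hB := finrank_map_ker_add_finrank_ker_inf A.mulVecLin B.mulVecLin
  rw [ker_mulVecLin_fromRows] at hAB
  unfold rank
  omega

theorem exists_mul_eq_zero_and_mul_eq_one_of_rank_fromRows [Fintype p] [DecidableEq p]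
    (A : Matrix m n 𝕜) (B : Matrix p n 𝕜)
    (h : (fromRows A B).rank = A.rank + Fintype.card p) :
    ∃ Q : Matrix n p 𝕜, A * Q = 0 ∧ B * Q = 1 := by
  have hsurj : (ker A.mulVecLin).map B.mulVecLin = ⊤ := by
    apply Submodule.eq_top_of_finrank_eq
    rw [finrank_pi]
    rw [rank_fromRows] at h
    omega
  have hcol (j : p) : ∃ x, A *ᵥ x = 0 ∧ B *ᵥ x = Pi.single j 1 := by
    obtain ⟨x, hxA, hxB⟩ := hsurj.ge (Submodule.mem_top (x := Pi.single j 1))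
    exact ⟨x, hxA, hxB⟩
  choose x hxA hxB using hcol
  refine ⟨(of x)ᵀ, ?_, ?_⟩
  · ext i j
    simpa [mulVec, dotProduct, mul_apply] using congrFun (hxA j) i
  · ext i j
    simpa [mulVec, dotProduct, mul_apply, one_apply, Pi.single_apply] using congrFun (hxB j) i

end Matrix

section ZeroPadding

variable {𝔽 : Type*} [Field 𝔽] {K : ℕ} (I : Finset (Fin K))

theorem mul_colSub_one {M : ℕ} (H : Matrix (Fin M) (Fin K) 𝔽) :
    H * colSub (1 : Matrix (Fin K) (Fin K) 𝔽) I = colSub H I :=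
  Matrix.mul_submatrix_one (Equiv.refl _) Subtype.val H

theorem colSub_one_mul_apply_of_notMem {N : ℕ} (Q : Matrix I (Fin N) 𝔽) {k : Fin K} (hk : k ∉ I)
    (j : Fin N) : (colSub (1 : Matrix (Fin K) (Fin K) 𝔽) I * Q) k j = 0 := by
  refine Finset.sum_eq_zero fun i _ => ?_
  have hki : k ≠ i := fun h => hk (h ▸ i.2)
  change (1 : Matrix (Fin K) (Fin K) 𝔽) k i * Q i j = 0
  rw [Matrix.one_apply_ne hki, zero_mul]

end ZeroPadding

/-- If `I` satisfies the rank-increment condition, then there is an encoding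
matrix `P` supported on the rows in `I`, i.e. `F * P = 0`, `rank (G * P) = N`,
and every row of `P` outside `I` is zero. -/
theorem exists_encoding_matrix_supported
    {𝔽 : Type*} [Field 𝔽] {M N K : ℕ}
    (F : Matrix (Fin M) (Fin K) 𝔽) (G : Matrix (Fin N) (Fin K) 𝔽)
    (I : Finset (Fin K))
    (hI : (Matrix.fromRows (colSub F I) (colSub G I)).rank = (colSub F I).rank + N) :
    ∃ P : Matrix (Fin K) (Fin N) 𝔽, F * P = 0 ∧ (G * P).rank = N ∧
      ∀ k ∉ I, ∀ j, P k j = 0 := by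
  obtain ⟨Q, hFQ, hGQ⟩ := Matrix.exists_mul_eq_zero_and_mul_eq_one_of_rank_fromRows
    (colSub F I) (colSub G I) (by rwa [Fintype.card_fin])
  refine ⟨colSub (1 : Matrix (Fin K) (Fin K) 𝔽) I * Q, ?_, ?_,
    fun k hk j => colSub_one_mul_apply_of_notMem I Q hk j⟩
  · rw [← Matrix.mul_assoc, mul_colSub_one, hFQ]
  · rw [← Matrix.mul_assoc, mul_colSub_one, hGQ, Matrix.rank_one, Fintype.card_fin]
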